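/- Let H be a Hopf algebra over a commutative ring k, and let t ∈ H be a left integral, i.e. h·t = ε(h)·t for all h ∈ H, such that ε(t) = 1. Then t is an idempotent (t² = t) and Δ(t)·(t⊗1_H) = t⊗t in H⊗H. In particular, ρ : k → k⊗H ≅ H, ρ(x) = x·t, makes k a right partial H-comodule algebra. -/

import Mathlib

open TensorProduct

/-- The map `A ⊗ H → (A ⊗ H) ⊗ H`, `a ⊗ h ↦ (a ⊗ h⁽¹⁾) ⊗ h⁽²⁾`, i.e. `id_A ⊗ δ`
followed by the inverse associator. -/
noncomputable def coassocMap (k A H : Type*) [CommRing k] [Ring A] [Algebra k A]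
    [Ring H] [Bialgebra k H] :
    A ⊗[k] H →ₗ[k] (A ⊗[k] H) ⊗[k] H :=
  (TensorProduct.assoc k A H H).symm.toLinearMap ∘ₗ
    LinearMap.lTensor A (Coalgebra.comul (R := k) (A := H))

/-- The map `ε' : A ⊗ H → A`, `a ⊗ h ↦ ε(h) a`. -/
noncomputable def counitMap (k A H : Type*) [CommRing k] [Ring A] [Algebra k A]
    [Ring H] [Bialgebra k H] :
    A ⊗[k] H →ₗ[k] A :=
  (TensorProduct.rid k A).toLinearMap ∘ₗ
    LinearMap.lTensor A (Coalgebra.counit (R := k) (A := H))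

/-- The coaction `ρ : k → k ⊗ H`, `x ↦ x ⊗ t`, associated to an element `t ∈ H`. -/
noncomputable def intCoaction (k H : Type*) [CommRing k] [Ring H] [Bialgebra k H]
    (t : H) : k →ₗ[k] k ⊗[k] H :=
  (TensorProduct.mk k k H).flip t

section Integral

variable {k H : Type*} [CommRing k] [Ring H]

theorem mul_tmul_one_eq_rTensor [Algebra k H] {f : H →ₗ[k] k} {t : H}
    (ht : ∀ h : H, h * t = f h • t) (z : H ⊗[k] H) :
    z * (t ⊗ₜ[k] (1 : H)) = (LinearMap.toSpanSingleton k H t ∘ₗ f).rTensor H z := by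
  induction z using TensorProduct.induction_on with
  | zero => simp
  | tmul a b => simp [Algebra.TensorProduct.tmul_mul_tmul, ht a]
  | add u v hu hv => rw [add_mul, map_add, hu, hv]

/-- In Sweedler notation, `Δ(t)(t ⊗ 1) = t₍₁₎t ⊗ t₍₂₎ = ε(t₍₁₎)t ⊗ t₍₂₎ = t ⊗ t`. -/
theorem comul_mul_tmul_one_of_mul_eq_counit_smul [Bialgebra k H] {t : H}
    (ht : ∀ h : H, h * t = Coalgebra.counit (R := k) h • t) :
    Coalgebra.comul (R := k) t * (t ⊗ₜ[k] (1 : H)) = t ⊗ₜ[k] t := by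
  rw [mul_tmul_one_eq_rTensor ht, LinearMap.rTensor_comp, LinearMap.comp_apply,
    Coalgebra.rTensor_counit_comul]
  simp

end Integral

section Coaction

variable {k A B C H : Type*} [CommRing k] [Ring A] [Algebra k A] [Ring B] [Algebra k B]
  [Ring C] [Algebra k C] [Ring H] [Bialgebra k H]

theorem assoc_symm_tmul_mul_tmul (a a' : A) (z : B ⊗[k] C) (b : B) (c : C) :
    (TensorProduct.assoc k A B C).symm (a ⊗ₜ[k] z) * ((a' ⊗ₜ[k] b) ⊗ₜ[k] c) =
      (TensorProduct.assoc k A B C).symm ((a * a') ⊗ₜ[k] (z * (b ⊗ₜ[k] c))) := by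
  have hmul := map_mul (Algebra.TensorProduct.assoc k k k A B C).symm (a ⊗ₜ z) (a' ⊗ₜ (b ⊗ₜ c))
  rw [Algebra.TensorProduct.tmul_mul_tmul] at hmul
  exact hmul.symm

theorem coassocMap_tmul (a : A) (h : H) :
    coassocMap k A H (a ⊗ₜ[k] h) =
      (TensorProduct.assoc k A H H).symm (a ⊗ₜ[k] Coalgebra.comul (R := k) h) := by
  simp [coassocMap]

theorem counitMap_tmul (a : A) (h : H) :
    counitMap k A H (a ⊗ₜ[k] h) = Coalgebra.counit (R := k) h • a := by
  simp [counitMap]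

theorem intCoaction_apply (t : H) (x : k) : intCoaction k H t x = x ⊗ₜ[k] t := rfl

end Coaction

/-- a left integral `t` in a Hopf algebra `H` with `ε(t) = 1` is an
idempotent satisfying `Δ(t)(t ⊗ 1) = t ⊗ t`; in particular `ρ(x) = x ⊗ t` makes `k` a
right partial `H`-comodule algebra (conditions (2.1.1), (2.2.1), (2.2.3)). -/
theorem integral_gives_partial_coaction (k H : Type*) [CommRing k] [Ring H]
    [HopfAlgebra k H] (t : H)
    (ht : ∀ h : H, h * t = Coalgebra.counit (R := k) h • t)
    (hεt : Coalgebra.counit (R := k) t = (1 : k)) :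
    t * t = t ∧
    Coalgebra.comul (R := k) t * (t ⊗ₜ[k] (1 : H)) = t ⊗ₜ[k] t ∧
    (∀ x y : k, intCoaction k H t (x * y) = intCoaction k H t x * intCoaction k H t y) ∧
    (∀ x : k, (intCoaction k H t).rTensor H (intCoaction k H t x) =
      coassocMap k k H (intCoaction k H t x) * (intCoaction k H t 1 ⊗ₜ[k] (1 : H))) ∧
    (∀ x : k, counitMap k k H (intCoaction k H t x) = x) := by
  have htt : t * t = t := by rw [ht t, hεt, one_smul]
  have hΔ := comul_mul_tmul_one_of_mul_eq_counit_smul ht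
  refine ⟨htt, hΔ, fun x y => ?_, fun x => ?_, fun x => ?_⟩
  · simp only [intCoaction_apply, Algebra.TensorProduct.tmul_mul_tmul, htt]
  · rw [intCoaction_apply, intCoaction_apply, coassocMap_tmul, assoc_symm_tmul_mul_tmul, hΔ,
      mul_one, LinearMap.rTensor_tmul, intCoaction_apply, TensorProduct.assoc_symm_tmul]
  · rw [intCoaction_apply, counitMap_tmul, hεt, one_smul]
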